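/- Let N ≥ 1, h = 1/N, t_i = i·h. Then ∑_{i=1}^{N} ∫_{t_{i−1}}^{t_i} ∫_{t_{i−1}}^{r} (t_i − r)²/(1 − u) du dr ≤ h². -/

import Mathlib

/-!
On a cell `[a, b]` with `b ≤ 1`, every `u ≤ r ≤ b` satisfies `b - r ≤ 1 - u`, so the
integrand `(b - r)² / (1 - u)` is at most `b - r`: the singularity at `u = 1` is harmless.
Integrating in `u` and then in `r` bounds each cell by `∫_a^b (r - a)(b - r) dr = h³ / 6`,
and the `N` cells contribute `N h³ / 6 ≤ h² / 6`.
-/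

open MeasureTheory Set

namespace intervalIntegral

theorem integral_mono_on_of_nonneg {f g : ℝ → ℝ} {a b : ℝ} (hab : a ≤ b)
    (hg : IntervalIntegrable g volume a b) (hf : ∀ x ∈ Icc a b, 0 ≤ f x)
    (hfg : ∀ x ∈ Icc a b, f x ≤ g x) :
    ∫ x in a..b, f x ≤ ∫ x in a..b, g x := by
  rw [integral_of_le hab, integral_of_le hab]
  refine integral_mono_of_nonneg ?_ hg.1 ?_ <;>
    filter_upwards [ae_restrict_mem measurableSet_Ioc] with x hx
  · exact hf x (Ioc_subset_Icc_self hx)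
  · exact hfg x (Ioc_subset_Icc_self hx)

theorem integral_sub_mul_sub (a b : ℝ) :
    ∫ r in a..b, (r - a) * (b - r) = (b - a) ^ 3 / 6 := by
  have hderiv : ∀ r ∈ uIcc a b,
      HasDerivAt (fun r => (b - a) * (r - a) ^ 2 / 2 - (r - a) ^ 3 / 3) ((r - a) * (b - r)) r := by
    intro r _
    have hlin := (hasDerivAt_id' r).sub_const a
    refine (((hlin.fun_pow 2).const_mul (b - a) |>.div_const 2).fun_sub
      ((hlin.fun_pow 3).div_const 3)).congr_deriv ?_
    push_cast
    ring
  rw [integral_eq_sub_of_hasDerivAt hderiv (by apply Continuous.intervalIntegrable; fun_prop)]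
  ring

end intervalIntegral

open intervalIntegral

theorem sq_sub_div_sub_le {u r b c : ℝ} (hur : u ≤ r) (hrb : r ≤ b) (hbc : b ≤ c) :
    (b - r) ^ 2 / (c - u) ≤ b - r := by
  rcases hrb.eq_or_lt with rfl | hrb
  · simp
  · rw [div_le_iff₀ (by linarith)]
    nlinarith

theorem integral_sq_sub_div_sub_le {a r b c : ℝ} (har : a ≤ r) (hrb : r ≤ b) (hbc : b ≤ c) :
    ∫ u in a..r, (b - r) ^ 2 / (c - u) ≤ (r - a) * (b - r) := by
  calc ∫ u in a..r, (b - r) ^ 2 / (c - u)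
      ≤ ∫ _ in a..r, (b - r) :=
        integral_mono_on_of_nonneg har intervalIntegrable_const
          (fun u hu => div_nonneg (sq_nonneg _) (by linarith [hu.2]))
          (fun u hu => sq_sub_div_sub_le hu.2 hrb hbc)
    _ = (r - a) * (b - r) := by rw [intervalIntegral.integral_const, smul_eq_mul]

theorem integral_integral_sq_sub_div_sub_le {a b c : ℝ} (hab : a ≤ b) (hbc : b ≤ c) :
    ∫ r in a..b, ∫ u in a..r, (b - r) ^ 2 / (c - u) ≤ (b - a) ^ 3 / 6 := by
  calc ∫ r in a..b, ∫ u in a..r, (b - r) ^ 2 / (c - u)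
      ≤ ∫ r in a..b, (r - a) * (b - r) :=
        integral_mono_on_of_nonneg hab (by apply Continuous.intervalIntegrable; fun_prop)
          (fun r hr => integral_nonneg hr.1
            fun u hu => div_nonneg (sq_nonneg _) (by linarith [hu.2, hr.2]))
          (fun r hr => integral_sq_sub_div_sub_le hr.1 hr.2 hbc)
    _ = (b - a) ^ 3 / 6 := integral_sub_mul_sub a b

theorem stmt_13_general (N : ℕ) (h : ℝ) (hh : h = 1 / (N : ℝ)) :
    (∑ i ∈ Finset.Icc 1 N,
        ∫ r in (((i : ℝ) - 1) * h)..((i : ℝ) * h),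
          ∫ u in (((i : ℝ) - 1) * h)..r, ((i : ℝ) * h - r) ^ 2 / (1 - u)) ≤ h ^ 2 := by
  have hh0 : 0 ≤ h := by rw [hh]; positivity
  have hNh : (N : ℝ) * h ≤ 1 := by rw [hh, mul_one_div]; exact div_self_le_one _
  have hcell : ∀ i ∈ Finset.Icc 1 N,
      ∫ r in (((i : ℝ) - 1) * h)..((i : ℝ) * h),
        ∫ u in (((i : ℝ) - 1) * h)..r, ((i : ℝ) * h - r) ^ 2 / (1 - u) ≤ h ^ 3 / 6 := by
    intro i hi
    have hiN : (i : ℝ) ≤ N := by exact_mod_cast (Finset.mem_Icc.mp hi).2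
    have hbound := integral_integral_sq_sub_div_sub_le (c := 1)
      (by nlinarith : ((i : ℝ) - 1) * h ≤ i * h) (by nlinarith : (i : ℝ) * h ≤ 1)
    rwa [show (i : ℝ) * h - (i - 1) * h = h by ring] at hbound
  calc _ ≤ ∑ _i ∈ Finset.Icc 1 N, h ^ 3 / 6 := Finset.sum_le_sum hcell
    _ = N * h * h ^ 2 / 6 := by
      simp only [Finset.sum_const, Nat.card_Icc, nsmul_eq_mul]
      push_cast
      ring
    _ ≤ h ^ 2 := by nlinarith [sq_nonneg h]

theorem stmt_13 (N : ℕ) (hN : 1 ≤ N) (h : ℝ) (hh : h = 1 / (N : ℝ)) :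
    (∑ i ∈ Finset.Icc 1 N,
        ∫ r in (((i : ℝ) - 1) * h)..((i : ℝ) * h),
          ∫ u in (((i : ℝ) - 1) * h)..r, ((i : ℝ) * h - r) ^ 2 / (1 - u)) ≤ h ^ 2 :=
  stmt_13_general N h hh
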